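/- Let $\kk$ be a field of characteristic $p > 0$, $G$ a finite $p$-group acting linearly on $V$ with dual basis $x_0, \ldots, x_n$ of $V^*$ in which $x_0$ is terminal, and let $d = \deg(x_0)$ be the minimal positive $x_0$-degree of an invariant monic in $x_0$. Let $\mathcal{H} = \kk[V]^G_+ \kk[V]$ be the Hilbert ideal. Then $\Delta^j(\mathcal{H}) \subseteq \mathcal{H}$ for all $0 \le j < d$, where $\Delta^j$ is the $j$-th Hasse derivative with respect to $x_0$. -/

import Mathlib

/-!
Each `ρ g` is the substitution `x₀ ↦ x₀ + ℓ`, `xᵢ ↦ ℓᵢ` with `ℓ, ℓᵢ` linear in `x₁, …, xₙ`, i.e. a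
coefficient map followed by a Taylor shift in `x₀`; both commute with Hasse derivatives in `x₀`,
so `Δ^l` maps invariants to invariants. Since `ρ g` preserves total degree, the degree-`l`
homogeneous component of an invariant is invariant, and if the invariant contains `x₀^l` this
component is, up to a scalar, an invariant monic of `x₀`-degree `l`. By minimality of `d`, for
`0 < l < d` no invariant contains `x₀^l`, so `Δ^l` of an invariant without constant term again has
none. The Leibniz rule `Δ^l (a s) = ∑ Δ^i a · Δ^(l-i) s` reduces the claim to the generators of `H`.
-/

namespace Polynomial

theorem hasseDeriv_map {R S : Type*} [Semiring R] [Semiring S] (σ : R →+* S) (l : ℕ)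
    (f : R[X]) : hasseDeriv l (f.map σ) = (hasseDeriv l f).map σ := by
  ext i
  simp [hasseDeriv_coeff]

theorem hasseDeriv_taylor {R : Type*} [Semiring R] (r : R) (l : ℕ) (f : R[X]) :
    hasseDeriv l (taylor r f) = taylor r (hasseDeriv l f) := by
  ext i
  rw [hasseDeriv_coeff, taylor_coeff, taylor_coeff, ← LinearMap.comp_apply, hasseDeriv_comp,
    LinearMap.smul_apply, eval_smul, nsmul_eq_mul, Nat.choose_symm_add]

variable {R : Type*} [CommSemiring R]

theorem map_hasseDeriv_of_map_C_of_map_X {φ : R[X] →+* R[X]} {σ : R →+* R} {a : R}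
    (hC : ∀ r, φ (C r) = C (σ r)) (hX : φ X = X + C a) (l : ℕ) (f : R[X]) :
    φ (hasseDeriv l f) = hasseDeriv l (φ f) := by
  have hφ : φ = (taylorAlgHom a : R[X] →+* R[X]).comp (mapRingHom σ) :=
    ringHom_ext (fun r => by simp [hC]) (by simp [hX])
  simp [hφ, hasseDeriv_map, hasseDeriv_taylor]

theorem hasseDeriv_mem_span_of_lt {S : Set R[X]} {d : ℕ}
    (hS : ∀ s ∈ S, ∀ l < d, hasseDeriv l s ∈ Ideal.span S) {f : R[X]} (hf : f ∈ Ideal.span S)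
    {l : ℕ} (hl : l < d) : hasseDeriv l f ∈ Ideal.span S := by
  induction hf using Submodule.span_induction generalizing l with
  | mem s hs => exact hS s hs l hl
  | zero => simp
  | add x y _ _ hx hy => simpa using add_mem (hx hl) (hy hl)
  | smul a x _ hx =>
    rw [smul_eq_mul, hasseDeriv_mul]
    exact sum_mem fun ij hij => Ideal.mul_mem_left _ _
      (hx (by have := Finset.HasAntidiagonal.mem_antidiagonal.mp hij; omega))

end Polynomial

namespace MvPolynomial

variable {R : Type*} [CommSemiring R]

theorem map_homogeneousComponent_of_isHomogeneous_X {ι κ : Type*}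
    {φ : MvPolynomial ι R →ₐ[R] MvPolynomial κ R} (hφ : ∀ i, (φ (X i)).IsHomogeneous 1)
    (j : ℕ) (q : MvPolynomial ι R) :
    φ (homogeneousComponent j q) = homogeneousComponent j (φ q) := by
  have hφ_eq : φ = aeval (fun i => φ (X i)) := algHom_ext fun i => by simp
  have hhom : ∀ i, (φ (homogeneousComponent i q)).IsHomogeneous i := fun i => by
    have := (homogeneousComponent_isHomogeneous i q).aeval _ hφ
    rwa [← hφ_eq, one_mul] at this
  conv_rhs => rw [← sum_homogeneousComponent q]
  rw [map_sum, map_sum, Finset.sum_eq_single j]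
  · exact ((homogeneousComponent_of_mem (hhom j)).trans (if_pos rfl)).symm
  · exact fun i _ hij => (homogeneousComponent_of_mem (hhom i)).trans (if_neg hij.symm)
  · intro hj
    rw [homogeneousComponent_eq_zero j q (by simpa using hj), map_zero, map_zero]

variable {n : ℕ}

theorem finSuccEquiv_symm_C (r : MvPolynomial (Fin n) R) :
    (finSuccEquiv R n).symm (Polynomial.C r) = rename Fin.succ r := by
  rw [AlgEquiv.symm_apply_eq]
  induction r using MvPolynomial.induction_on with
  | C a => simp [finSuccEquiv_apply]
  | add p q hp hq => simp [hp, hq]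
  | mul_X p i hp => simp [hp, finSuccEquiv_X_succ]

theorem finSuccEquiv_symm_X : (finSuccEquiv R n).symm Polynomial.X = X 0 := by
  rw [AlgEquiv.symm_apply_eq, finSuccEquiv_X_zero]

theorem constantCoeff_coeff_finSuccEquiv_homogeneousComponent (j : ℕ)
    (φ : MvPolynomial (Fin (n + 1)) R) :
    constantCoeff ((finSuccEquiv R n (homogeneousComponent j φ)).coeff j) =
      constantCoeff ((finSuccEquiv R n φ).coeff j) := by
  simp only [constantCoeff_eq, finSuccEquiv_coeff_coeff, coeff_homogeneousComponent]
  rw [if_pos]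
  simp [Finsupp.degree_eq_sum, Fin.sum_univ_succ]

namespace IsHomogeneous

variable {φ : MvPolynomial (Fin (n + 1)) R} {j : ℕ}

theorem natDegree_finSuccEquiv_le (hφ : φ.IsHomogeneous j) :
    (finSuccEquiv R n φ).natDegree ≤ j :=
  natDegree_finSuccEquiv φ ▸ (degreeOf_le_totalDegree φ 0).trans hφ.totalDegree_le

theorem coeff_finSuccEquiv_eq_C (hφ : φ.IsHomogeneous j) :
    (finSuccEquiv R n φ).coeff j = C (constantCoeff ((finSuccEquiv R n φ).coeff j)) := by
  have h0 := hφ.finSuccEquiv_coeff_isHomogeneous j 0 (add_zero j)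
  simpa [constantCoeff_eq] using (homogeneousComponent_of_mem (m := 0) h0).symm

theorem finSuccEquiv_monic [Nontrivial R] (hφ : φ.IsHomogeneous j)
    (h1 : constantCoeff ((finSuccEquiv R n φ).coeff j) = 1) :
    (finSuccEquiv R n φ).Monic ∧ (finSuccEquiv R n φ).natDegree = j := by
  have hcoeff : (finSuccEquiv R n φ).coeff j = 1 := by
    rw [hφ.coeff_finSuccEquiv_eq_C, h1, C_1]
  exact ⟨Polynomial.monic_of_natDegree_le_of_coeff_eq_one j hφ.natDegree_finSuccEquiv_le hcoeff,
    Polynomial.natDegree_eq_of_le_of_coeff_ne_zero hφ.natDegree_finSuccEquiv_le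
      (hcoeff ▸ one_ne_zero)⟩

end IsHomogeneous

variable {F : Type*}
  [FunLike F (Polynomial (MvPolynomial (Fin n) R)) (Polynomial (MvPolynomial (Fin n) R))]
  [AlgHomClass F R (Polynomial (MvPolynomial (Fin n) R)) (Polynomial (MvPolynomial (Fin n) R))]
  {e : F}

theorem map_hasseDeriv_of_map_C_X_of_map_X
    (hC : ∀ i, ∃ ℓ, e (Polynomial.C (X i)) = Polynomial.C ℓ)
    (hX : ∃ ℓ, e Polynomial.X = Polynomial.X + Polynomial.C ℓ) (l : ℕ)
    (f : Polynomial (MvPolynomial (Fin n) R)) :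
    e (Polynomial.hasseDeriv l f) = Polynomial.hasseDeriv l (e f) := by
  choose v hv using hC
  obtain ⟨ℓ, hℓ⟩ := hX
  have hCr : ∀ r, e (Polynomial.C r) = Polynomial.C (aeval v r) := fun r => by
    induction r using MvPolynomial.induction_on with
    | C a => simpa [Polynomial.algebraMap_apply] using AlgHomClass.commutes e a
    | add p q hp hq => simp [hp, hq]
    | mul_X p i hp => simp [hp, hv]
  exact Polynomial.map_hasseDeriv_of_map_C_of_map_X
    (φ := (e : Polynomial (MvPolynomial (Fin n) R) →+* _)) hCr hℓ l f

theorem map_finSuccEquiv_homogeneousComponent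
    (hC : ∀ i, ∃ ℓ : MvPolynomial (Fin n) R,
      ℓ.IsHomogeneous 1 ∧ e (Polynomial.C (X i)) = Polynomial.C ℓ)
    (hX : ∃ ℓ : MvPolynomial (Fin n) R,
      ℓ.IsHomogeneous 1 ∧ e Polynomial.X = Polynomial.X + Polynomial.C ℓ)
    (j : ℕ) (φ : MvPolynomial (Fin (n + 1)) R) :
    e (finSuccEquiv R n (homogeneousComponent j φ)) =
      finSuccEquiv R n
        (homogeneousComponent j ((finSuccEquiv R n).symm (e (finSuccEquiv R n φ)))) := by
  set ψ := (finSuccEquiv R n).symm.toAlgHom.comp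
    ((AlgHomClass.toAlgHom e).comp (finSuccEquiv R n).toAlgHom)
  have hψ : ∀ i, (ψ (X i)).IsHomogeneous 1 := Fin.cases
    (by
      obtain ⟨ℓ, hℓ, heX⟩ := hX
      simpa [ψ, finSuccEquiv_X_zero, heX, finSuccEquiv_symm_X, finSuccEquiv_symm_C] using
        (isHomogeneous_X R 0).add hℓ.rename_isHomogeneous)
    (fun i => by
      obtain ⟨ℓ, hℓ, heC⟩ := hC i
      simpa [ψ, finSuccEquiv_X_succ, heC, finSuccEquiv_symm_C] using hℓ.rename_isHomogeneous)
  simpa [ψ] using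
    congrArg (finSuccEquiv R n) (map_homogeneousComponent_of_isHomogeneous_X hψ j φ)

end MvPolynomial

open MvPolynomial in
theorem exists_invariant_monic_of_constantCoeff_coeff_ne_zero {k : Type*} [Field k] {n : ℕ}
    {G : Type*} [Group G]
    {ρ : G →* (Polynomial (MvPolynomial (Fin n) k) ≃ₐ[k] Polynomial (MvPolynomial (Fin n) k))}
    (hterm : ∀ (g : G) (i : Fin n), ∃ ℓ : MvPolynomial (Fin n) k,
      ℓ.IsHomogeneous 1 ∧ ρ g (Polynomial.C (X i)) = Polynomial.C ℓ)
    (hX : ∀ g : G, ∃ ℓ : MvPolynomial (Fin n) k,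
      ℓ.IsHomogeneous 1 ∧ ρ g Polynomial.X = Polynomial.X + Polynomial.C ℓ)
    {f : Polynomial (MvPolynomial (Fin n) k)} (hf : ∀ g, ρ g f = f) {j : ℕ}
    (hc : constantCoeff (f.coeff j) ≠ 0) :
    ∃ F : Polynomial (MvPolynomial (Fin n) k), (∀ g, ρ g F = F) ∧ F.Monic ∧ F.natDegree = j := by
  set c := constantCoeff (f.coeff j)
  set h := homogeneousComponent j ((finSuccEquiv k n).symm (c⁻¹ • f))
  have h1 : constantCoeff ((finSuccEquiv k n h).coeff j) = 1 := by
    rw [constantCoeff_coeff_finSuccEquiv_homogeneousComponent, AlgEquiv.apply_symm_apply,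
      Polynomial.coeff_smul, constantCoeff_smul, smul_eq_mul, inv_mul_cancel₀ hc]
  refine ⟨finSuccEquiv k n h, fun g => ?_,
    (homogeneousComponent_isHomogeneous j _).finSuccEquiv_monic h1⟩
  have := map_finSuccEquiv_homogeneousComponent (e := ρ g) (hterm g) (hX g) j
    ((finSuccEquiv k n).symm (c⁻¹ • f))
  simpa only [h, AlgEquiv.apply_symm_apply, map_smul, hf] using this

theorem hasseDeriv_preserves_hilbert_ideal_general (k : Type*) [Field k]
    (G : Type*) [Group G] (n : ℕ)
    (ρ : G →* (Polynomial (MvPolynomial (Fin n) k) ≃ₐ[k] Polynomial (MvPolynomial (Fin n) k)))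
    (hterm : ∀ (g : G) (j : Fin n), ∃ ℓ : MvPolynomial (Fin n) k,
      ℓ.IsHomogeneous 1 ∧ ρ g (Polynomial.C (MvPolynomial.X j)) = Polynomial.C ℓ)
    (hX : ∀ g : G, ∃ ℓ : MvPolynomial (Fin n) k,
      ℓ.IsHomogeneous 1 ∧ ρ g Polynomial.X = Polynomial.X + Polynomial.C ℓ)
    (d : ℕ)
    (hdmin : ∀ e : ℕ, 0 < e → (∃ f : Polynomial (MvPolynomial (Fin n) k),
      (∀ g : G, ρ g f = f) ∧ f.Monic ∧ f.natDegree = e) → d ≤ e)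
    -- the Hilbert ideal
    (H : Ideal (Polynomial (MvPolynomial (Fin n) k)))
    (hH : H = Ideal.span {f : Polynomial (MvPolynomial (Fin n) k) |
      (∀ g : G, ρ g f = f) ∧ MvPolynomial.constantCoeff (f.coeff 0) = 0}) :
    ∀ j : ℕ, j < d → ∀ f ∈ H, Polynomial.hasseDeriv j f ∈ H := by
  subst hH
  intro j hj f hf
  refine Polynomial.hasseDeriv_mem_span_of_lt (fun s hs l hl => Ideal.subset_span ?_) hf hj
  refine ⟨fun g => ?_, ?_⟩
  · rw [MvPolynomial.map_hasseDeriv_of_map_C_X_of_map_X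
      (fun i => (hterm g i).imp fun _ => And.right) ((hX g).imp fun _ => And.right), hs.1 g]
  · rw [Polynomial.hasseDeriv_coeff, zero_add, Nat.choose_self, Nat.cast_one, one_mul]
    rcases Nat.eq_zero_or_pos l with rfl | hl0
    · exact hs.2
    · by_contra hc
      have := hdmin l hl0 (exists_invariant_monic_of_constantCoeff_coeff_ne_zero hterm hX hs.1 hc)
      omega

/-- For a finite `p`-group `G` acting linearly with terminal variable `x₀` of degree `d`,
the Hasse derivatives `Δ^j` for `j < d` preserve the Hilbert ideal
`H = k[V]^G_+ · k[V]` (the ideal generated by invariants of positive degree, equivalently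
by invariants with zero constant term). -/
theorem hasseDeriv_preserves_hilbert_ideal {p : ℕ} (hp : p.Prime) (k : Type*) [Field k]
    [CharP k p] (G : Type*) [Group G] [Finite G] (hG : IsPGroup p G) (n : ℕ)
    (ρ : G →* (Polynomial (MvPolynomial (Fin n) k) ≃ₐ[k] Polynomial (MvPolynomial (Fin n) k)))
    (hterm : ∀ (g : G) (j : Fin n), ∃ ℓ : MvPolynomial (Fin n) k,
      ℓ.IsHomogeneous 1 ∧ ρ g (Polynomial.C (MvPolynomial.X j)) = Polynomial.C ℓ)
    (hX : ∀ g : G, ∃ ℓ : MvPolynomial (Fin n) k,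
      ℓ.IsHomogeneous 1 ∧ ρ g Polynomial.X = Polynomial.X + Polynomial.C ℓ)
    (d : ℕ) (hd0 : 0 < d)
    (hdex : ∃ f : Polynomial (MvPolynomial (Fin n) k),
      (∀ g : G, ρ g f = f) ∧ f.Monic ∧ f.natDegree = d)
    (hdmin : ∀ e : ℕ, 0 < e → (∃ f : Polynomial (MvPolynomial (Fin n) k),
      (∀ g : G, ρ g f = f) ∧ f.Monic ∧ f.natDegree = e) → d ≤ e)
    -- the Hilbert ideal
    (H : Ideal (Polynomial (MvPolynomial (Fin n) k)))
    (hH : H = Ideal.span {f : Polynomial (MvPolynomial (Fin n) k) |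
      (∀ g : G, ρ g f = f) ∧ MvPolynomial.constantCoeff (f.coeff 0) = 0}) :
    ∀ j : ℕ, j < d → ∀ f ∈ H, Polynomial.hasseDeriv j f ∈ H :=
  hasseDeriv_preserves_hilbert_ideal_general k G n ρ hterm hX d hdmin H hH
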